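/- arXiv:2110.15234 — 3 statements merged into one kernel-verified Lean document; each statement's English description precedes it below -/
import Mathlib

section
/- Let T be a finite tree (connected acyclic graph) equipped with a graph automorphism sigma of order 2 acting on its vertices, induced by a point reflection of the plane through a point u under an embedding h: T -> R^2 with h(sigma(v)) = -h(v) + 2u. If sigma has no fixed vertex with h-image equal to u and u is not in the image h(T), then sigma leads to a contradiction: there exist two distinct paths between a vertex v and sigma(v), contradicting T being a tree. Hence u must lie in h(T). -/
open SimpleGraph

lemma getVert_map_aux {V : Type*} {G G' : SimpleGraph V} (f : G →g G') {v w : V}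
    (p : G.Walk v w) (i : ℕ) : (p.map f).getVert i = f (p.getVert i) := by
  induction p generalizing i with
  | nil => simp [SimpleGraph.Walk.getVert]
  | cons h q ih => cases i <;> simp [SimpleGraph.Walk.getVert, ih]

lemma tree_invol_aux {V : Type*} (G : SimpleGraph V) (hT : G.IsTree)
    (σ : G ≃g G) (hσ : ∀ v, σ (σ v) = v)
    (hfix : ∀ v, σ v ≠ v) (hedge : ∀ v, ¬ G.Adj v (σ v)) : False := by
  have hconn := hT.isConnected
  have hne : Nonempty V := hconn.nonempty
  have key : ∀ n : ℕ, ∀ v : V, G.dist v (σ v) = n → False := by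
    intro n
    induction n using Nat.strong_induction_on with
    | _ n IH =>
      intro v hd
      obtain ⟨p, hp, hlen⟩ := hconn.exists_path_of_dist v (σ v)
      have hn0 : n ≠ 0 := by
        intro h0
        exact hfix v ((hconn.dist_eq_zero_iff.mp (hd ▸ h0)).symm)
      have hn1 : n ≠ 1 := by
        intro h1
        exact hedge v (SimpleGraph.dist_eq_one_iff_adj.mp (hd ▸ h1))
      have hn2 : 2 ≤ n := by omega
      rw [hd] at hlen
      -- stability of p under σ
      set q : G.Walk (σ v) v := (p.map σ.toHom).copy rfl (hσ v) with hq
      have hinj : Function.Injective (σ.toHom : V → V) := σ.toEquiv.injective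
      have hqpath : q.reverse.IsPath := by
        apply SimpleGraph.Walk.IsPath.reverse
        rw [hq, SimpleGraph.Walk.isPath_copy]
        exact SimpleGraph.Walk.map_isPath_of_injective hinj hp
      obtain ⟨pp, -, huniq⟩ := hT.existsUnique_path v (σ v)
      have hstab : p.reverse = q := by
        have h1 := huniq _ hqpath
        have h2 := huniq _ hp
        rw [← h2] at h1
        rw [← h1, SimpleGraph.Walk.reverse_reverse]
      -- σ of the second vertex is the penultimate vertex
      have hpn : ¬ p.Nil := by
        rw [SimpleGraph.Walk.not_nil_iff_lt_length]; omega
      have hgv : p.getVert (n - 1) = σ (p.getVert 1) := by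
        have := SimpleGraph.Walk.getVert_reverse p 1
        rw [hstab, hq] at this
        rw [SimpleGraph.Walk.getVert_copy, getVert_map_aux] at this
        rw [hlen] at this
        exact this.symm
      -- build a walk from σ (getVert 1) to getVert 1 of length n - 2
      have hrlen : p.tail.length = n - 1 := by
        have := SimpleGraph.Walk.length_tail_add_one hpn
        omega
      have hrn : ¬ p.tail.reverse.Nil := by
        rw [SimpleGraph.Walk.not_nil_iff_lt_length, SimpleGraph.Walk.length_reverse]
        omega
      have hslen : p.tail.reverse.tail.length = n - 2 := by
        have := SimpleGraph.Walk.length_tail_add_one hrn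
        rw [SimpleGraph.Walk.length_reverse] at this
        omega
      have hstart : p.tail.reverse.getVert 1 = σ (p.getVert 1) := by
        rw [SimpleGraph.Walk.getVert_reverse, hrlen,
          SimpleGraph.Walk.getVert_tail p]
        have : n - 1 - 1 + 1 = n - 1 := by omega
        rw [this]
        exact hgv
      -- distance bound
      have hdist : G.dist (σ (p.getVert 1)) (p.getVert 1) ≤ n - 2 := by
        rw [← hstart, ← hslen]
        exact SimpleGraph.dist_le p.tail.reverse.tail
      have hd2 : G.dist (p.getVert 1) (σ (p.getVert 1)) ≤ n - 2 := by
        rwa [SimpleGraph.dist_comm]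
      exact IH (G.dist (p.getVert 1) (σ (p.getVert 1))) (by omega) (p.getVert 1) rfl
  exact key (G.dist (Classical.arbitrary V) (σ (Classical.arbitrary V))) _ rfl

/-- Let `T` be a finite tree with an automorphism `σ` of order two,
induced by a point reflection of the plane through `u` under an embedding
`h : V → ℝ²` (i.e. `h (σ v) = 2u - h v`).  If `u` were neither the image of a
vertex nor on any edge segment of the embedded tree, one would get two distinct
paths between some vertex `v` and `σ v`, contradicting that `T` is a tree.
Hence `u` lies in `h(T)`: it is the image of a vertex or lies on the segment
joining the images of two adjacent vertices. -/
theorem reflection_fixed_point_in_tree {V : Type*} [Fintype V] [Nonempty V]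
    (G : SimpleGraph V) (hT : G.IsTree)
    (σ : G ≃g G) (hσ : ∀ v, σ (σ v) = v)
    (u : ℝ × ℝ) (h : V → ℝ × ℝ)
    (hrefl : ∀ v, h (σ v) = (2 : ℝ) • u - h v) :
    (∃ v, h v = u) ∨ (∃ v w, G.Adj v w ∧ u ∈ segment ℝ (h v) (h w)) := by
  by_cases hfix : ∃ v, σ v = v
  · obtain ⟨v, hv⟩ := hfix
    left
    refine ⟨v, ?_⟩
    have := hrefl v
    rw [hv] at this
    have h2 : (2 : ℝ) • h v = (2 : ℝ) • u := by
      rw [two_smul, two_smul]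
      linear_combination (norm := module) this
    have := smul_right_injective (ℝ × ℝ) (two_ne_zero (α := ℝ)) h2
    exact this
  by_cases hedge : ∃ v, G.Adj v (σ v)
  · obtain ⟨v, hv⟩ := hedge
    right
    refine ⟨v, σ v, hv, ?_⟩
    refine ⟨1/2, 1/2, by norm_num, by norm_num, by norm_num, ?_⟩
    rw [hrefl v]
    module
  · exact (tree_invol_aux G hT σ hσ (fun v hv => hfix ⟨v, hv⟩)
      (fun v hv => hedge ⟨v, hv⟩)).elim
end

section
/- Suppose z1, z2 are nonzero elements of a field with B*z1 + C = lambda*z2, A*z2 + C = lambda*z1, and lambda = z1*z2 + 1. Then z1 = C*(lambda + A)/(lambda^2 - A*B) and z2 = C*(lambda + B)/(lambda^2 - A*B) (assuming lambda^2 ≠ A*B), and lambda satisfies the quintic equation lambda^5 - lambda^4 - 2AB*lambda^3 + (2AB - C^2)*lambda^2 + (A^2B^2 - C^2(A+B))*lambda - ABC^2 - A^2B^2 = 0. -/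
/-- If `z1, z2` are nonzero field elements with
`B*z1 + C = λ*z2`, `A*z2 + C = λ*z1`, `λ = z1*z2 + 1`, and `λ² ≠ A*B`, then
`z1 = C(λ+A)/(λ²-AB)`, `z2 = C(λ+B)/(λ²-AB)`, and `λ` satisfies the quintic
`λ⁵ - λ⁴ - 2ABλ³ + (2AB - C²)λ² + (A²B² - C²(A+B))λ - ABC² - A²B² = 0`. -/
theorem dp5_critical_points_quintic {F : Type*} [Field F]
    (A B C lam z1 z2 : F)
    (hz1 : z1 ≠ 0) (hz2 : z2 ≠ 0)
    (he1 : B * z1 + C = lam * z2)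
    (he2 : A * z2 + C = lam * z1)
    (hlam : lam = z1 * z2 + 1)
    (hden : lam ^ 2 ≠ A * B) :
    z1 = C * (lam + A) / (lam ^ 2 - A * B) ∧
    z2 = C * (lam + B) / (lam ^ 2 - A * B) ∧
    lam ^ 5 - lam ^ 4 - 2 * A * B * lam ^ 3 + (2 * A * B - C ^ 2) * lam ^ 2 +
      (A ^ 2 * B ^ 2 - C ^ 2 * (A + B)) * lam - A * B * C ^ 2 - A ^ 2 * B ^ 2 = 0 := by
  have hd : lam ^ 2 - A * B ≠ 0 := sub_ne_zero.mpr hden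
  have h1 : z1 * (lam ^ 2 - A * B) = C * (lam + A) := by
    linear_combination -(lam * he2) - A * he1
  have h2 : z2 * (lam ^ 2 - A * B) = C * (lam + B) := by
    linear_combination -(lam * he1) - B * he2
  refine ⟨by field_simp; linear_combination h1, by rw [eq_div_iff hd]; linear_combination h2, ?_⟩
  linear_combination (z2 * (lam ^ 2 - A * B)) * h1 + (C * (lam + A)) * h2 +
    (lam ^ 2 - A * B) ^ 2 * hlam
end

section
/- In the A2 scattering diagram, the composition of wall-crossing automorphisms around the origin is the identity: with initial walls (x-axis, 1+x) and (y-axis, 1+y) and the inserted wall (diagonal ray, 1+xy), the pentagon-type consistency holds; equivalently, for the automorphisms of C[x^{±1}, y^{±1}] (formally completed) given by theta_{1+y}: (x,y) -> (x(1+y)^{±1}, y), theta_{1+x}: (x,y) -> (x, y(1+x)^{±1}), theta_{1+xy}: (x,y) -> (x(1+xy)^{±1}, y(1+xy)^{∓1}), the path-ordered product around a loop encircling the origin equals the identity. -/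
/-- Crossing the diagonal wall `(ℝ≥0·(1,1), 1 + xy)` (counterclockwise, starting
just above the positive `x`-axis): `(x, y) ↦ (x(1+xy), y(1+xy)⁻¹)`. -/
noncomputable def crossDiag (p : ℂ × ℂ) : ℂ × ℂ :=
  (p.1 * (1 + p.1 * p.2), p.2 * (1 + p.1 * p.2)⁻¹)

/-- Crossing the positive `y`-axis wall with function `1 + y`. -/
noncomputable def crossYPos (p : ℂ × ℂ) : ℂ × ℂ := (p.1 * (1 + p.2), p.2)

/-- Crossing the negative `x`-axis wall with function `1 + x`. -/
noncomputable def crossXNeg (p : ℂ × ℂ) : ℂ × ℂ := (p.1, p.2 * (1 + p.1))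

/-- Crossing the negative `y`-axis wall with function `1 + y`. -/
noncomputable def crossYNeg (p : ℂ × ℂ) : ℂ × ℂ := (p.1 * (1 + p.2)⁻¹, p.2)

/-- Crossing the positive `x`-axis wall with function `1 + x`. -/
noncomputable def crossXPos (p : ℂ × ℂ) : ℂ × ℂ := (p.1, p.2 * (1 + p.1)⁻¹)

/-- Consistency of the `A2` scattering diagram: with initial walls
(`x`-axis, `1+x`) and (`y`-axis, `1+y`) and the inserted wall (diagonal ray,
`1+xy`), the path-ordered product of wall-crossing transformations around a
loop encircling the origin equals the identity (wherever all the wall functions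
encountered are nonzero). -/
theorem a2_scattering_consistency (p : ℂ × ℂ)
    (h1 : 1 + p.1 * p.2 ≠ 0)
    (h2 : 1 + (crossXNeg (crossYPos (crossDiag p))).2 ≠ 0)
    (h3 : 1 + (crossYNeg (crossXNeg (crossYPos (crossDiag p)))).1 ≠ 0) :
    crossXPos (crossYNeg (crossXNeg (crossYPos (crossDiag p)))) = p := by
  obtain ⟨x, y⟩ := p
  simp only at h1
  have s3 : crossXNeg (crossYPos (crossDiag (x, y))) = (x * (1 + y + x * y), y * (1 + x)) := by
    simp only [crossDiag, crossYPos, crossXNeg, Prod.mk.injEq]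
    constructor
    · field_simp; ring
    · linear_combination (x*y + x*y^2*(1+x*y)⁻¹ + y) * inv_mul_cancel₀ h1
  rw [s3] at h2 h3 ⊢
  simp only at h2
  have s4 : crossYNeg ((x * (1 + y + x * y), y * (1 + x)) : ℂ × ℂ) = (x, y * (1 + x)) := by
    simp only [crossYNeg, Prod.mk.injEq]
    refine ⟨?_, trivial⟩
    have : (1 : ℂ) + y * (1 + x) = 1 + y + x * y := by ring
    rw [this]
    rw [mul_inv_cancel_right₀]
    rw [← this]; exact h2
  rw [s4] at h3 ⊢
  simp only at h3
  simp only [crossXPos, Prod.mk.injEq]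
  exact ⟨trivial, by rw [mul_inv_cancel_right₀ h3]⟩
end
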